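/- Let d ∈ (0, 1/2) and let g_d(θ) := log r_d(θ), where r_d(θ) := |1-e^{iθ}|^{2d+2} ∑_{k∈ℤ} |θ+2πk|^{-(2d+2)} for θ ≠ 0 and r_d(0):=1. Then L_d := -(1/4π) ∫_{-π}^{π} g_d(t) / sin²(t/2) dt is finite and strictly positive. -/

import Mathlib

/-
For `0 < |t| ≤ π` put `σ = sinc (t / 2) ∈ (0, 1)` and `p = 2d + 2 > 2`. The `k = 0` term of the
lattice sum gives `r t ≥ σ ^ p`. Since `|t + 2πk| ≥ |t|`, each term is at most
`|t| ^ (2 - p) |t + 2πk| ^ (-2)`, and `∑ₖ (t + 2πk) ^ (-2) = 1 / (4 sin² (t / 2))` (Parseval), so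
`r t ≤ σ ^ (p - 2)`. Hence `log r t ≤ (p - 2) log σ < 0`, while `-log σ ≤ 2 sin² (t / 2)` bounds
the integrand below by `-2p`: it is bounded and negative away from `t = 0`.
-/

open Real Complex
open MeasureTheory Filter Set

namespace Real

lemma sinc_abs (x : ℝ) : sinc |x| = sinc x := by
  rcases abs_choice x with h | h <;> simp [h, sinc_neg]

lemma sinc_pos_of_abs_lt_pi {x : ℝ} (hx : |x| < π) : 0 < sinc x := by
  rw [← sinc_abs]
  rcases (abs_nonneg x).eq_or_lt with h | h
  · rw [← h, sinc_zero]
    exact one_pos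
  · rw [sinc_of_ne_zero h.ne']
    exact div_pos (sin_pos_of_pos_of_lt_pi h hx) h

lemma sinc_half_pos {t : ℝ} (ht : |t| ≤ π) : 0 < sinc (t / 2) :=
  sinc_pos_of_abs_lt_pi (by rw [abs_div, abs_two]; linarith [pi_pos])

lemma sinc_lt_one {x : ℝ} (hx : x ≠ 0) : sinc x < 1 := by
  have hx' : 0 < |x| := abs_pos.mpr hx
  rw [← sinc_abs, sinc_of_ne_zero hx'.ne', div_lt_one hx']
  exact sin_lt hx'

-- `log (1 / s) ≤ 1 / s - 1`, `u - sin u ≤ u ^ 3 / 6` and Jordan's inequality `u / 2 ≤ sin u`.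
lemma neg_log_sinc_le {u : ℝ} (hu : |u| ≤ π / 2) : -log (sinc u) ≤ 2 * sin u ^ 2 := by
  wlog hu0 : 0 < u generalizing u
  · rcases (not_lt.mp hu0).eq_or_lt with rfl | hneg
    · simp
    · simpa [sinc_neg] using this (u := -u) (by rwa [abs_neg]) (by linarith)
  have hjordan : u / 2 ≤ sin u := by
    have := mul_le_sin hu0.le (abs_of_pos hu0 ▸ hu)
    have : 1 / 2 ≤ 2 / π := by rw [div_le_div_iff₀ two_pos pi_pos]; linarith [pi_le_four]
    nlinarith
  have hs : 0 < sin u := by linarith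
  have hcube : (u / 2) ^ 3 ≤ sin u ^ 3 := pow_le_pow_left₀ (by positivity) hjordan 3
  rw [sinc_of_ne_zero hu0.ne', ← log_inv, inv_div]
  calc log (u / sin u) ≤ u / sin u - 1 := log_le_sub_one_of_pos (by positivity)
    _ ≤ 2 * sin u ^ 2 := by
      rw [div_sub_one hs.ne', div_le_iff₀ hs]
      nlinarith [sin_ge_sub_cube hu0.le, pow_pos hu0 3]

lemma two_mul_abs_sin_half_div_abs {t : ℝ} (ht0 : t ≠ 0) (ht : |t| < 2 * π) :
    2 * |sin (t / 2)| / |t| = sinc (t / 2) := by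
  have hpos := sinc_pos_of_abs_lt_pi (x := t / 2) (by rw [abs_div, abs_two]; linarith)
  rw [← abs_of_pos hpos, sinc_of_ne_zero (by positivity), abs_div, abs_div, abs_two]
  field_simp

lemma sin_half_ne_zero {t : ℝ} (ht0 : t ≠ 0) (ht : |t| ≤ π) : sin (t / 2) ≠ 0 := by
  have := two_mul_abs_sin_half_div_abs ht0 (by linarith [pi_pos]) ▸ sinc_half_pos ht
  intro h
  simp [h] at this

end Real

lemma intervalIntegral_neg_of_ae_neg {f : ℝ → ℝ} {a b : ℝ} (hab : a < b)
    (hfi : IntervalIntegrable f volume a b) (hf : ∀ᵐ x ∂volume.restrict (Ioc a b), f x < 0) :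
    ∫ x in a..b, f x < 0 := by
  have hlt : volume.restrict (Ioc a b) {x | f x < 0} ≠ 0 := by
    have hfull : {x | f x < 0} =ᵐ[volume.restrict (Ioc a b)] univ := ae_eq_univ.mpr (ae_iff.mp hf)
    rw [measure_congr hfull, Measure.restrict_apply_univ, Real.volume_Ioc]
    exact (ENNReal.ofReal_pos.mpr (sub_pos.mpr hab)).ne'
  simpa using intervalIntegral.integral_lt_integral_of_ae_le_of_measure_setOfPred_lt_ne_zero
    hab.le hfi intervalIntegrable_const (hf.mono fun _ hx => hx.le) hlt

lemma norm_one_sub_exp_I_mul (θ : ℝ) : ‖1 - exp (I * θ)‖ = 2 * |Real.sin (θ / 2)| := by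
  rw [norm_sub_rev, norm_exp_I_mul_ofReal_sub_one, norm_mul, Real.norm_eq_abs,
    Real.norm_eq_abs, abs_two]

lemma abs_le_abs_add_two_pi_mul_int {t : ℝ} (ht : |t| ≤ π) (k : ℤ) : |t| ≤ |t + 2 * π * k| := by
  rcases eq_or_ne k 0 with rfl | hk
  · simp
  have hk1 : (1 : ℝ) ≤ |(k : ℝ)| := by exact_mod_cast Int.one_le_abs hk
  have h2πk : 2 * π ≤ |2 * π * k| := by
    rw [abs_mul, abs_of_pos two_pi_pos]
    nlinarith [pi_pos]
  have htri := abs_sub (t + 2 * π * k) t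
  rw [add_sub_cancel_left] at htri
  linarith

lemma fourierCoeffOn_exp_mul_I {a : ℝ} {n : ℤ} (hn : a ≠ n) :
    fourierCoeffOn zero_lt_one (fun x : ℝ => exp (2 * π * a * x * I)) n =
      (exp (2 * π * a * I) - 1) / (2 * π * (a - n) * I) := by
  have hc : (2 * π * (a - n) * I : ℂ) ≠ 0 := by
    have : (a : ℂ) - n ≠ 0 := by exact_mod_cast sub_ne_zero.mpr hn
    simp [pi_ne_zero, this, I_ne_zero]
  rw [fourierCoeffOn_eq_integral _ _ zero_lt_one, sub_zero, div_one, one_smul]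
  simp_rw [fourier_coe_apply, smul_eq_mul, ← Complex.exp_add]
  have hexponent : ∀ x : ℝ, 2 * π * I * ((-n : ℤ) : ℂ) * x / ((1 : ℝ) : ℂ) + 2 * π * a * x * I =
      2 * π * (a - n) * I * x := fun x => by push_cast; ring
  simp_rw [hexponent, integral_exp_mul_complex hc]
  congr 1
  have hend : (2 * π * (a - n) * I : ℂ) * ((1 : ℝ) : ℂ) =
      2 * π * a * I + (-n : ℤ) * (2 * π * I) := by
    push_cast; ring
  rw [hend, Complex.exp_add, exp_int_mul_two_pi_mul_I]
  simp

-- Parseval's identity for `x ↦ exp (2πiax)` on `[0, 1]`.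
theorem hasSum_inv_sq_sub_int {a : ℝ} (ha : ∀ n : ℤ, a ≠ n) :
    HasSum (fun n : ℤ => ((a - n) ^ 2)⁻¹) (π ^ 2 / Real.sin (π * a) ^ 2) := by
  set f : ℝ → ℂ := fun x => exp (2 * π * a * x * I)
  have hf : ∀ x : ℝ, ‖f x‖ = 1 := fun x => by
    simpa [f] using norm_exp_ofReal_mul_I (2 * π * a * x)
  have hL2 : MemLp f 2 (volume.restrict (Ioc 0 1)) :=
    MemLp.of_bound (by fun_prop) 1 (ae_of_all _ fun x => (hf x).le)
  have hs : Real.sin (π * a) ≠ 0 := fun h => by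
    obtain ⟨n, hn⟩ := Real.sin_eq_zero_iff.mp h
    exact ha n (by nlinarith [pi_pos])
  have hcoeff : ∀ n : ℤ, ‖fourierCoeffOn zero_lt_one f n‖ ^ 2 =
      Real.sin (π * a) ^ 2 / π ^ 2 * ((a - n) ^ 2)⁻¹ := fun n => by
    rw [fourierCoeffOn_exp_mul_I (ha n), norm_div, ← norm_neg, neg_sub,
      show (2 * π * a * I : ℂ) = I * ((2 * π * a : ℝ) : ℂ) by push_cast; ring,
      norm_one_sub_exp_I_mul, ← ofReal_intCast, ← ofReal_sub]
    simp only [norm_mul, norm_I, Complex.norm_ofNat, Complex.norm_real, Real.norm_eq_abs,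
      abs_of_pos pi_pos, mul_one]
    rw [show 2 * π * a / 2 = π * a by ring, div_pow, mul_pow, mul_pow, sq_abs, sq_abs]
    field_simp
  have hparseval := hasSum_sq_fourierCoeffOn zero_lt_one hL2
  simp only [hcoeff, hf, sub_zero, inv_one, one_pow,
    intervalIntegral.integral_const, smul_eq_mul, mul_one] at hparseval
  rw [show (1 : ℝ) = Real.sin (π * a) ^ 2 / π ^ 2 * (π ^ 2 / Real.sin (π * a) ^ 2) by
    field_simp] at hparseval
  exact (hasSum_mul_left_iff (by positivity)).mp hparseval

lemma hasSum_abs_add_two_pi_mul_int_rpow_neg_two {t : ℝ} (ht : Real.sin (t / 2) ≠ 0) :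
    HasSum (fun k : ℤ => |t + 2 * π * k| ^ (-2 : ℝ)) ((2 * |Real.sin (t / 2)|) ^ (-2 : ℝ)) := by
  have hπa : π * (t / (2 * π)) = t / 2 := by field_simp
  have ha : ∀ n : ℤ, t / (2 * π) ≠ n := fun n h => ht <| by
    rw [← hπa, h, mul_comm]
    exact Real.sin_int_mul_pi n
  have hsum : HasSum (fun k : ℤ => ((t / (2 * π) + k) ^ 2)⁻¹) (π ^ 2 / Real.sin (t / 2) ^ 2) := by
    simpa [Function.comp_def, hπa] using
      (Equiv.neg ℤ).hasSum_iff.mpr (hasSum_inv_sq_sub_int ha)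
  have hterm : ∀ k : ℤ, |t + 2 * π * k| ^ (-2 : ℝ) =
      ((2 * π) ^ 2)⁻¹ * ((t / (2 * π) + k) ^ 2)⁻¹ := fun k => by
    rw [Real.rpow_neg (abs_nonneg _), Real.rpow_two, sq_abs]
    field_simp
  have hval : (2 * |Real.sin (t / 2)|) ^ (-2 : ℝ) =
      ((2 * π) ^ 2)⁻¹ * (π ^ 2 / Real.sin (t / 2) ^ 2) := by
    rw [Real.rpow_neg (by positivity), Real.rpow_two, mul_pow, sq_abs]
    field_simp
  simpa only [hterm, hval] using hsum.mul_left ((2 * π) ^ 2)⁻¹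

section LatticeSum

variable {p t : ℝ}

lemma abs_add_two_pi_mul_int_rpow_neg_le (hp : 2 ≤ p) (ht0 : t ≠ 0) (ht : |t| ≤ π) (k : ℤ) :
    |t + 2 * π * k| ^ (-p) ≤ |t| ^ (2 - p) * |t + 2 * π * k| ^ (-2 : ℝ) := by
  have hle := abs_le_abs_add_two_pi_mul_int ht k
  have hpos : 0 < |t + 2 * π * k| := (abs_pos.mpr ht0).trans_le hle
  rw [show -p = (2 - p) + -2 by ring, Real.rpow_add hpos]
  exact mul_le_mul_of_nonneg_right
    (Real.rpow_le_rpow_of_nonpos (abs_pos.mpr ht0) hle (by linarith)) (by positivity)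

lemma summable_abs_add_two_pi_mul_int_rpow_neg (hp : 2 ≤ p) (ht0 : t ≠ 0) (ht : |t| ≤ π) :
    Summable fun k : ℤ => |t + 2 * π * k| ^ (-p) :=
  Summable.of_nonneg_of_le (fun _ => by positivity) (abs_add_two_pi_mul_int_rpow_neg_le hp ht0 ht)
    ((hasSum_abs_add_two_pi_mul_int_rpow_neg_two (sin_half_ne_zero ht0 ht)).summable.mul_left _)

lemma abs_rpow_neg_le_tsum_abs_add_two_pi_mul_int_rpow_neg (hp : 2 ≤ p) (ht0 : t ≠ 0)
    (ht : |t| ≤ π) :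
    |t| ^ (-p) ≤ ∑' k : ℤ, |t + 2 * π * k| ^ (-p) := by
  simpa using (summable_abs_add_two_pi_mul_int_rpow_neg hp ht0 ht).le_tsum 0
    (fun _ _ => by positivity)

lemma tsum_abs_add_two_pi_mul_int_rpow_neg_le (hp : 2 ≤ p) (ht0 : t ≠ 0) (ht : |t| ≤ π) :
    ∑' k : ℤ, |t + 2 * π * k| ^ (-p) ≤ |t| ^ (2 - p) * (2 * |Real.sin (t / 2)|) ^ (-2 : ℝ) :=
  hasSum_le (abs_add_two_pi_mul_int_rpow_neg_le hp ht0 ht)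
    (summable_abs_add_two_pi_mul_int_rpow_neg hp ht0 ht).hasSum
    ((hasSum_abs_add_two_pi_mul_int_rpow_neg_two (sin_half_ne_zero ht0 ht)).mul_left _)

end LatticeSum

-- The paper's `r_d` for `p = 2 * d + 2`, away from `θ = 0`.
noncomputable def aliasRatio (p θ : ℝ) : ℝ :=
  ‖1 - exp (I * θ)‖ ^ p * ∑' k : ℤ, |θ + 2 * π * k| ^ (-p)

section AliasRatio

variable {p t : ℝ}

lemma aliasRatio_eq (p θ : ℝ) :
    aliasRatio p θ = (2 * |Real.sin (θ / 2)|) ^ p * ∑' k : ℤ, |θ + 2 * π * k| ^ (-p) := by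
  rw [aliasRatio, norm_one_sub_exp_I_mul]

lemma sinc_rpow_le_aliasRatio (hp : 2 ≤ p) (ht0 : t ≠ 0) (ht : |t| ≤ π) :
    sinc (t / 2) ^ p ≤ aliasRatio p t := by
  rw [aliasRatio_eq, ← two_mul_abs_sin_half_div_abs ht0 (by linarith [pi_pos]),
    Real.div_rpow (by positivity) (abs_nonneg t), div_eq_mul_inv, ← Real.rpow_neg (abs_nonneg t)]
  exact mul_le_mul_of_nonneg_left
    (abs_rpow_neg_le_tsum_abs_add_two_pi_mul_int_rpow_neg hp ht0 ht) (by positivity)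

lemma aliasRatio_le_sinc_rpow (hp : 2 ≤ p) (ht0 : t ≠ 0) (ht : |t| ≤ π) :
    aliasRatio p t ≤ sinc (t / 2) ^ (p - 2) := by
  have hA : 0 < 2 * |Real.sin (t / 2)| := by have := sin_half_ne_zero ht0 ht; positivity
  have hB : 0 < |t| := abs_pos.mpr ht0
  calc aliasRatio p t
      ≤ (2 * |Real.sin (t / 2)|) ^ p * (|t| ^ (2 - p) * (2 * |Real.sin (t / 2)|) ^ (-2 : ℝ)) := by
        rw [aliasRatio_eq]
        exact mul_le_mul_of_nonneg_left (tsum_abs_add_two_pi_mul_int_rpow_neg_le hp ht0 ht)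
          (by positivity)
    _ = (2 * |Real.sin (t / 2)| / |t|) ^ (p - 2) := by
        rw [Real.div_rpow hA.le hB.le, Real.rpow_sub hA, show (2 : ℝ) - p = -(p - 2) by ring,
          Real.rpow_neg hB.le, Real.rpow_neg hA.le]
        field_simp
    _ = sinc (t / 2) ^ (p - 2) := by
        rw [two_mul_abs_sin_half_div_abs ht0 (by linarith [pi_pos])]

lemma mul_log_sinc_le_log_aliasRatio (hp : 2 ≤ p) (ht0 : t ≠ 0) (ht : |t| ≤ π) :
    p * Real.log (sinc (t / 2)) ≤ Real.log (aliasRatio p t) := by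
  rw [← Real.log_rpow (sinc_half_pos ht)]
  exact Real.log_le_log (by have := sinc_half_pos ht; positivity)
    (sinc_rpow_le_aliasRatio hp ht0 ht)

lemma log_aliasRatio_le_mul_log_sinc (hp : 2 ≤ p) (ht0 : t ≠ 0) (ht : |t| ≤ π) :
    Real.log (aliasRatio p t) ≤ (p - 2) * Real.log (sinc (t / 2)) := by
  have hpos : 0 < aliasRatio p t :=
    (by have := sinc_half_pos ht; positivity : 0 < sinc (t / 2) ^ p).trans_le
      (sinc_rpow_le_aliasRatio hp ht0 ht)
  rw [← Real.log_rpow (sinc_half_pos ht)]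
  exact Real.log_le_log hpos (aliasRatio_le_sinc_rpow hp ht0 ht)

lemma neg_two_mul_le_log_aliasRatio_div_sin_sq (hp : 2 ≤ p) (ht0 : t ≠ 0) (ht : |t| ≤ π) :
    -(2 * p) ≤ Real.log (aliasRatio p t) / Real.sin (t / 2) ^ 2 := by
  have hsin : 0 < Real.sin (t / 2) ^ 2 := by have := sin_half_ne_zero ht0 ht; positivity
  have hlog := neg_log_sinc_le (u := t / 2) (by rw [abs_div, abs_two]; linarith)
  rw [le_div_iff₀ hsin]
  nlinarith [mul_log_sinc_le_log_aliasRatio hp ht0 ht]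

lemma log_aliasRatio_div_sin_sq_nonpos (hp : 2 ≤ p) (ht0 : t ≠ 0) (ht : |t| ≤ π) :
    Real.log (aliasRatio p t) / Real.sin (t / 2) ^ 2 ≤ 0 := by
  have hlog : Real.log (sinc (t / 2)) ≤ 0 :=
    Real.log_nonpos (sinc_half_pos ht).le (sinc_le_one _)
  exact div_nonpos_of_nonpos_of_nonneg
    ((log_aliasRatio_le_mul_log_sinc hp ht0 ht).trans
      (mul_nonpos_of_nonneg_of_nonpos (by linarith) hlog)) (sq_nonneg _)

lemma log_aliasRatio_div_sin_sq_neg (hp : 2 < p) (ht0 : t ≠ 0) (ht : |t| ≤ π) :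
    Real.log (aliasRatio p t) / Real.sin (t / 2) ^ 2 < 0 := by
  have hlog : Real.log (sinc (t / 2)) < 0 :=
    Real.log_neg (sinc_half_pos ht) (sinc_lt_one (by positivity))
  have hsin : 0 < Real.sin (t / 2) ^ 2 := by have := sin_half_ne_zero ht0 ht; positivity
  exact div_neg_of_neg_of_pos ((log_aliasRatio_le_mul_log_sinc hp.le ht0 ht).trans_lt
    (mul_neg_of_pos_of_neg (by linarith) hlog)) hsin

lemma measurable_aliasRatio (p : ℝ) : Measurable (aliasRatio p) :=
  (by fun_prop : Measurable fun θ : ℝ => ‖1 - exp (I * θ)‖ ^ p).mul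
    (Measurable.tsum fun _ => by fun_prop)

lemma integrableOn_log_aliasRatio_div_sin_sq (hp : 2 ≤ p) :
    IntegrableOn (fun t => Real.log (aliasRatio p t) / Real.sin (t / 2) ^ 2) (Ioc (-π) π) := by
  refine IntegrableOn.of_bound measure_Ioc_lt_top
    ((measurable_aliasRatio p).log.div (by fun_prop)).aestronglyMeasurable (2 * p) ?_
  filter_upwards [ae_restrict_mem measurableSet_Ioc, ae_restrict_of_ae (Measure.ae_ne volume 0)]
    with t ht ht0
  have ht' : |t| ≤ π := abs_le.mpr ⟨ht.1.le, ht.2⟩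
  rw [Real.norm_eq_abs, abs_le]
  exact ⟨neg_two_mul_le_log_aliasRatio_div_sin_sq hp ht0 ht',
    (log_aliasRatio_div_sin_sq_nonpos hp ht0 ht').trans (by linarith)⟩

end AliasRatio

lemma integral_log_aliasRatio_div_sin_sq_neg {p : ℝ} (hp : 2 < p) :
    ∫ t in (-π)..π, Real.log (aliasRatio p t) / Real.sin (t / 2) ^ 2 < 0 := by
  have hπ : -π < π := by linarith [pi_pos]
  refine intervalIntegral_neg_of_ae_neg hπ
    ((intervalIntegrable_iff_integrableOn_Ioc_of_le hπ.le).mpr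
      (integrableOn_log_aliasRatio_div_sin_sq hp.le)) ?_
  filter_upwards [ae_restrict_mem measurableSet_Ioc, ae_restrict_of_ae (Measure.ae_ne volume 0)]
    with t ht ht0
  exact log_aliasRatio_div_sin_sq_neg hp ht0 (abs_le.mpr ⟨ht.1.le, ht.2⟩)

theorem Ld_finite_positive_general (d : ℝ) (hd : d ∈ Set.Ioo (0 : ℝ) (1/2))
    (r : ℝ → ℝ)
    (hr : ∀ θ : ℝ, θ ≠ 0 →
      r θ = ‖1 - Complex.exp (Complex.I * θ)‖ ^ (2 * d + 2) *
        ∑' k : ℤ, |θ + 2 * π * k| ^ (-(2 * d + 2))) :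
    MeasureTheory.IntegrableOn (fun t => Real.log (r t) / Real.sin (t / 2) ^ 2)
      (Set.Ioc (-π) π) ∧
    0 < -(1 / (4 * π)) * ∫ t in (-π : ℝ)..π, Real.log (r t) / Real.sin (t / 2) ^ 2 := by
  have hp : 2 < 2 * d + 2 := by linarith [hd.1]
  have hae : (fun t => Real.log (aliasRatio (2 * d + 2) t) / Real.sin (t / 2) ^ 2) =ᵐ[volume]
      fun t => Real.log (r t) / Real.sin (t / 2) ^ 2 := by
    filter_upwards [Measure.ae_ne volume 0] with t ht0
    rw [hr t ht0, aliasRatio]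
  refine ⟨(integrableOn_log_aliasRatio_div_sin_sq hp.le).congr_fun_ae (ae_restrict_of_ae hae),
    mul_pos_of_neg_of_neg (by simp [pi_pos]) ?_⟩
  rw [← intervalIntegral.integral_congr_ae (hae.mono fun _ h _ => h)]
  exact integral_log_aliasRatio_div_sin_sq_neg hp

theorem Ld_finite_positive (d : ℝ) (hd : d ∈ Set.Ioo (0 : ℝ) (1/2))
    (r : ℝ → ℝ)
    (hr : ∀ θ : ℝ, θ ≠ 0 →
      r θ = ‖1 - Complex.exp (Complex.I * θ)‖ ^ (2 * d + 2) *
        ∑' k : ℤ, |θ + 2 * π * k| ^ (-(2 * d + 2)))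
    (hr0 : r 0 = 1) :
    MeasureTheory.IntegrableOn (fun t => Real.log (r t) / Real.sin (t / 2) ^ 2)
      (Set.Ioc (-π) π) ∧
    0 < -(1 / (4 * π)) * ∫ t in (-π : ℝ)..π, Real.log (r t) / Real.sin (t / 2) ^ 2 :=
  Ld_finite_positive_general d hd r hr
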